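/- arXiv:1902.00865 — 4 statements merged into one kernel-verified Lean document; each statement's English description precedes it below -/
import Mathlib

section
/- Let (z*, λ*, v*) be an equilibrium of the dynamics ż_i = -f_i'(z_i) + λ_i, λ̇_i = -Σ_j a_{ij}(λ_i - λ_j) - Σ_j a_{ij}(v_i - v_j) + d_i - z_i, v̇_i = Σ_j a_{ij}(λ_i - λ_j), i = 1,...,N, over a connected undirected graph. Then Σ_i z*_i = Σ_i d_i, all λ*_i are equal, f_i'(z*_i) = λ*_i for all i, and hence z* is the unique optimal solution of minimizing Σ f_i(y_i) subject to Σ y_i = Σ d_i. -/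
/-- Any equilibrium of the primal-dual optimal signal generator over a
connected undirected graph is feasible, has equal multipliers `λ*_i`, satisfies
`f_i'(z*_i) = λ*_i`, and `z*` is the unique optimal solution of the resource
allocation problem. -/
theorem generator_equilibrium_is_optimal (N : ℕ) (hN : 0 < N)
    (a : Fin N → Fin N → ℝ)
    (hsymm : ∀ i j, a i j = a j i)
    (hnonneg : ∀ i j, 0 ≤ a i j)
    (hdiag : ∀ i, a i i = 0)
    (hconn : ∀ i j : Fin N, Relation.ReflTransGen (fun p q => 0 < a p q) i j)
    (f : Fin N → ℝ → ℝ) (d : Fin N → ℝ) (h_low h_high : ℝ)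
    (hf : ∀ i, ContDiff ℝ 2 (f i))
    (hlow : 0 < h_low) (hle : h_low ≤ h_high)
    (hbound : ∀ i, ∀ s : ℝ, h_low ≤ deriv (deriv (f i)) s ∧ deriv (deriv (f i)) s ≤ h_high)
    (z lam v : Fin N → ℝ)
    (heq1 : ∀ i, -deriv (f i) (z i) + lam i = 0)
    (heq2 : ∀ i, -(∑ j, a i j * (lam i - lam j)) - (∑ j, a i j * (v i - v j))
        + d i - z i = 0)
    (heq3 : ∀ i, ∑ j, a i j * (lam i - lam j) = 0) :
    (∑ i, z i = ∑ i, d i) ∧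
    (∀ i j, lam i = lam j) ∧
    (∀ i, deriv (f i) (z i) = lam i) ∧
    ((∀ w : Fin N → ℝ, (∑ i, w i = ∑ i, d i) → ∑ i, f i (z i) ≤ ∑ i, f i (w i)) ∧
      ∀ y : Fin N → ℝ, (∑ i, y i = ∑ i, d i) →
        (∀ w : Fin N → ℝ, (∑ i, w i = ∑ i, d i) → ∑ i, f i (y i) ≤ ∑ i, f i (w i)) →
        y = z) := by
  classical
  -- strict convexity of each f i
  have hconv : ∀ i, StrictConvexOn ℝ Set.univ (f i) := by
    intro i
    refine strictConvexOn_of_deriv2_pos' convex_univ (hf i).continuous.continuousOn ?_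
    intro x _
    have h2 : (deriv^[2] (f i)) x = deriv (deriv (f i)) x := by
      simp [Function.iterate_succ, Function.iterate_zero, Function.comp]
    rw [h2]
    exact lt_of_lt_of_le hlow (hbound i x).1
  have hdiff : ∀ i, Differentiable ℝ (f i) := fun i =>
    (hf i).differentiable (by norm_num)
  -- tangent line inequality (strict)
  have htan : ∀ i (x w : ℝ), x ≠ w →
      f i x + deriv (f i) x * (w - x) < f i w := by
    intro i x w hne
    rcases lt_or_gt_of_ne hne with h | h
    · have hs := (hconv i).deriv_lt_slope (Set.mem_univ x) (Set.mem_univ w) h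
        ((hdiff i).differentiableAt)
      rw [slope_def_field] at hs
      have hpos : (0:ℝ) < w - x := by linarith
      have := (lt_div_iff₀ hpos).1 hs
      linarith
    · have hs := (hconv i).slope_lt_deriv (Set.mem_univ w) (Set.mem_univ x) h
        ((hdiff i).differentiableAt)
      rw [slope_def_field] at hs
      have hpos : (0:ℝ) < x - w := by linarith
      have h1 := (div_lt_iff₀ hpos).1 hs
      have h2 : deriv (f i) x * (w - x) = -(deriv (f i) x * (x - w)) := by ring
      linarith
  -- antisymmetric double sums vanish
  have key : ∀ g : Fin N → ℝ, ∑ i, ∑ j, a i j * (g i - g j) = 0 := by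
    intro g
    have h : ∑ i, ∑ j, a i j * (g i - g j) = -∑ i, ∑ j, a i j * (g i - g j) := by
      calc ∑ i, ∑ j, a i j * (g i - g j)
          = ∑ j, ∑ i, a i j * (g i - g j) := Finset.sum_comm
        _ = ∑ i, ∑ j, -(a i j * (g i - g j)) := by
            refine Finset.sum_congr rfl fun i _ => Finset.sum_congr rfl fun j _ => ?_
            rw [hsymm]; ring
        _ = -∑ i, ∑ j, a i j * (g i - g j) := by
            simp [Finset.sum_neg_distrib]
    linarith
  -- lambda is constant
  have hA : ∑ i, ∑ j, a i j * (lam i * (lam i - lam j)) = 0 := by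
    refine Finset.sum_eq_zero fun i _ => ?_
    have : ∑ j, a i j * (lam i * (lam i - lam j))
        = lam i * ∑ j, a i j * (lam i - lam j) := by
      rw [Finset.mul_sum]
      exact Finset.sum_congr rfl fun j _ => by ring
    rw [this, heq3 i, mul_zero]
  have hB : ∑ i, ∑ j, a i j * (lam j * (lam j - lam i))
      = ∑ i, ∑ j, a i j * (lam i * (lam i - lam j)) := by
    rw [Finset.sum_comm]
    exact Finset.sum_congr rfl fun j _ => Finset.sum_congr rfl fun i _ => by
      rw [hsymm]
  have hS : ∑ i, ∑ j, a i j * (lam i - lam j) ^ 2 = 0 := by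
    have : ∑ i, ∑ j, a i j * (lam i - lam j) ^ 2
        = (∑ i, ∑ j, a i j * (lam i * (lam i - lam j)))
          + (∑ i, ∑ j, a i j * (lam j * (lam j - lam i))) := by
      rw [← Finset.sum_add_distrib]
      refine Finset.sum_congr rfl fun i _ => ?_
      rw [← Finset.sum_add_distrib]
      exact Finset.sum_congr rfl fun j _ => by ring
    rw [this, hB, hA]; ring
  have hEdge : ∀ i j, 0 < a i j → lam i = lam j := by
    intro i j hij
    have houter := (Finset.sum_eq_zero_iff_of_nonneg
      (fun i _ => Finset.sum_nonneg fun j _ =>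
        mul_nonneg (hnonneg i j) (sq_nonneg _))).1 hS i (Finset.mem_univ i)
    have hterm := (Finset.sum_eq_zero_iff_of_nonneg
      (fun j _ => mul_nonneg (hnonneg i j) (sq_nonneg _))).1 houter j (Finset.mem_univ j)
    have hsq : (lam i - lam j) ^ 2 = 0 := by
      rcases mul_eq_zero.1 hterm with h | h
      · exact absurd h (ne_of_gt hij)
      · exact h
    have := pow_eq_zero_iff (n := 2) (by norm_num) |>.1 hsq
    linarith
  have hlamEq : ∀ i j, lam i = lam j := by
    intro i j
    induction hconn i j with
    | refl => rfl
    | tail _ h2 ih => exact ih.trans (hEdge _ _ h2)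
  -- feasibility
  have hfeas : ∑ i, z i = ∑ i, d i := by
    have h0 : ∑ i, (-(∑ j, a i j * (lam i - lam j)) - (∑ j, a i j * (v i - v j))
        + d i - z i) = 0 := Finset.sum_eq_zero fun i _ => heq2 i
    have hexp : ∑ i, (-(∑ j, a i j * (lam i - lam j)) - (∑ j, a i j * (v i - v j))
        + d i - z i)
        = -(∑ i, ∑ j, a i j * (lam i - lam j)) - (∑ i, ∑ j, a i j * (v i - v j))
          + ∑ i, d i - ∑ i, z i := by
      rw [Finset.sum_sub_distrib, Finset.sum_add_distrib, Finset.sum_sub_distrib,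
        Finset.sum_neg_distrib]
    rw [hexp, key lam, key v] at h0
    linarith
  -- gradient condition
  have hgrad : ∀ i, deriv (f i) (z i) = lam i := fun i => by linarith [heq1 i]
  -- all multipliers equal c
  set i0 : Fin N := ⟨0, hN⟩ with hi0
  set c : ℝ := lam i0 with hc
  have hlamc : ∀ i, lam i = c := fun i => hlamEq i i0
  -- optimality
  have hopt : ∀ w : Fin N → ℝ, (∑ i, w i = ∑ i, d i) →
      ∑ i, f i (z i) ≤ ∑ i, f i (w i) := by
    intro w hw
    have hpt : ∀ i ∈ Finset.univ, f i (z i) + c * (w i - z i) ≤ f i (w i) := by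
      intro i _
      by_cases hzi : z i = w i
      · rw [hzi]; simp
      · have := htan i (z i) (w i) hzi
        rw [hgrad i, hlamc i] at this
        linarith
    have hsum := Finset.sum_le_sum hpt
    have hL : ∑ i, (f i (z i) + c * (w i - z i))
        = ∑ i, f i (z i) + c * (∑ i, w i - ∑ i, z i) := by
      rw [Finset.sum_add_distrib, ← Finset.mul_sum, Finset.sum_sub_distrib]
    rw [hL, hw, hfeas, sub_self, mul_zero, add_zero] at hsum
    exact hsum
  refine ⟨hfeas, hlamEq, hgrad, hopt, ?_⟩
  -- uniqueness
  intro y hyfeas hyopt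
  by_contra hne
  obtain ⟨i1, hi1⟩ := Function.ne_iff.1 hne
  have hyz : ∑ i, f i (y i) = ∑ i, f i (z i) :=
    le_antisymm (hyopt z hfeas) (hopt y hyfeas)
  set m : Fin N → ℝ := fun i => (y i + z i) / 2 with hm
  have hmfeas : ∑ i, m i = ∑ i, d i := by
    have : ∑ i, m i = (∑ i, y i + ∑ i, z i) / 2 := by
      rw [← Finset.sum_add_distrib, ← Finset.sum_div]
    rw [this, hyfeas, hfeas]; ring
  have hweak : ∀ i ∈ Finset.univ, f i (m i) ≤ (f i (y i) + f i (z i)) / 2 := by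
    intro i _
    by_cases h : y i = z i
    · simp [hm, h]
    · have := (hconv i).2 (Set.mem_univ (y i)) (Set.mem_univ (z i)) h
        (by norm_num : (0:ℝ) < 1/2) (by norm_num : (0:ℝ) < 1/2) (by norm_num)
      simp only [smul_eq_mul] at this
      have hmeq : m i = 1/2 * y i + 1/2 * z i := by rw [hm]; ring
      rw [hmeq]
      linarith
  have hstrict : f i1 (m i1) < (f i1 (y i1) + f i1 (z i1)) / 2 := by
    have := (hconv i1).2 (Set.mem_univ (y i1)) (Set.mem_univ (z i1)) hi1
      (by norm_num : (0:ℝ) < 1/2) (by norm_num : (0:ℝ) < 1/2) (by norm_num)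
    simp only [smul_eq_mul] at this
    have hmeq : m i1 = 1/2 * y i1 + 1/2 * z i1 := by rw [hm]; ring
    rw [hmeq]
    linarith
  have hlt : ∑ i, f i (m i) < ∑ i, (f i (y i) + f i (z i)) / 2 :=
    Finset.sum_lt_sum hweak ⟨i1, Finset.mem_univ i1, hstrict⟩
  have hR : ∑ i, (f i (y i) + f i (z i)) / 2 = ∑ i, f i (z i) := by
    rw [← Finset.sum_div, Finset.sum_add_distrib, hyz]; ring
  have := hopt m hmfeas
  rw [hR] at hlt
  linarith
end

section
/- Let L ∈ ℝ^{N×N} be a symmetric positive semidefinite matrix with kernel spanned by 1_N, and let R ∈ ℝ^{N×(N-1)} satisfy R^T 1_N = 0, R^T R = I_{N-1}. Define the block matrix T = [[-L, -LR],[R^T L, 0]] ∈ ℝ^{(2N-1)×(2N-1)} and S = [-I_N, 0] ∈ ℝ^{N×(2N-1)}. Then T + T^T is negative semidefinite and the pair (S, T) is observable, i.e., for every eigenvector w of T, Sw ≠ 0. -/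
/-!
`-(T + Tᵀ)` is `2L` in its upper-left block and zero elsewhere, hence positive semidefinite.
For observability, `Sw = 0` kills the upper block `a` of `w = (a, b)`, and then the upper block
row of `Tw = μw` reads `L R b = 0`. So `R b` lies in `ker L = span 1`, and applying `Rᵀ` gives
`b = RᵀR b ∈ span (Rᵀ 1) = 0`. The complex eigenvector is handled by running this argument on
its real and imaginary parts.
-/

open Matrix

namespace Matrix

variable {m n : Type*}

lemma PosSemidef.fromBlocks_zero {R : Type*} [CommRing R] [PartialOrder R] [StarRing R]
    [Fintype m] [Fintype n] [DecidableEq m] {A : Matrix m m R} (hA : A.PosSemidef) :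
    (fromBlocks A 0 0 (0 : Matrix n n R)).PosSemidef := by
  have h := hA.conjTranspose_mul_mul_same (fromCols (1 : Matrix m m R) (0 : Matrix m n R))
  rw [conjTranspose_fromCols_eq_fromRows_conjTranspose, fromRows_mul, fromRows_mul_fromCols]
    at h
  simpa using h

lemma re_map_ofReal_mulVec [Fintype n] (A : Matrix m n ℝ) (u : n → ℂ) (i : m) :
    ((A.map Complex.ofReal *ᵥ u) i).re = (A *ᵥ fun j => (u j).re) i := by
  simp [mulVec, dotProduct, Complex.re_sum]

lemma im_map_ofReal_mulVec [Fintype n] (A : Matrix m n ℝ) (u : n → ℂ) (i : m) :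
    ((A.map Complex.ofReal *ᵥ u) i).im = (A *ᵥ fun j => (u j).im) i := by
  simp [mulVec, dotProduct, Complex.im_sum]

lemma eq_zero_of_map_ofReal_mulVec_eq_zero [Fintype n] {A : Matrix m n ℝ}
    (hA : ∀ x, A *ᵥ x = 0 → x = 0) {u : n → ℂ} (hu : A.map Complex.ofReal *ᵥ u = 0) :
    u = 0 := by
  have hre : (fun j => (u j).re) = 0 :=
    hA _ (funext fun i => by simp [← re_map_ofReal_mulVec, hu])
  have him : (fun j => (u j).im) = 0 :=
    hA _ (funext fun i => by simp [← im_map_ofReal_mulVec, hu])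
  funext j
  exact Complex.ext (congrFun hre j) (congrFun him j)

lemma eq_zero_of_mul_mulVec_eq_zero {K : Type*} [CommRing K] [Fintype m] [Fintype n]
    [DecidableEq m] {L : Matrix n n K} {R : Matrix n m K}
    (hker : ∀ x, L *ᵥ x = 0 → ∃ c : K, x = fun _ => c)
    (hR1 : Rᵀ *ᵥ (fun _ => 1) = 0) (hRorth : Rᵀ * R = 1) {x : m → K}
    (hx : (L * R) *ᵥ x = 0) : x = 0 := by
  obtain ⟨c, hc⟩ := hker (R *ᵥ x) (by rw [mulVec_mulVec, hx])
  calc x = (Rᵀ * R) *ᵥ x := by rw [hRorth, one_mulVec]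
    _ = c • (Rᵀ *ᵥ fun _ => 1) := by
      rw [← mulVec_mulVec, hc, ← mulVec_smul]; congr 1; ext; simp
    _ = 0 := by rw [hR1, smul_zero]

end Matrix

theorem block_matrix_dissipative_and_observable_general (N : ℕ)
    (L : Matrix (Fin N) (Fin N) ℝ) (R : Matrix (Fin N) (Fin (N - 1)) ℝ)
    (hLsymm : L.IsSymm) (hLpsd : L.PosSemidef)
    (hker : ∀ x : Fin N → ℝ, L.mulVec x = 0 ↔ ∃ c : ℝ, x = fun _ => c)
    (hR1 : R.transpose.mulVec (fun _ => (1 : ℝ)) = 0)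
    (hRorth : R.transpose * R = 1) :
    let T : Matrix (Fin N ⊕ Fin (N - 1)) (Fin N ⊕ Fin (N - 1)) ℝ :=
      Matrix.fromBlocks (-L) (-(L * R)) (R.transpose * L) 0
    let S : Matrix (Fin N) (Fin N ⊕ Fin (N - 1)) ℝ :=
      Matrix.of fun i j => Sum.casesOn j (fun k => if i = k then (-1 : ℝ) else 0) (fun _ => 0)
    (-(T + T.transpose)).PosSemidef ∧
      ∀ (μ : ℂ) (w : Fin N ⊕ Fin (N - 1) → ℂ), w ≠ 0 →
        (T.map (Complex.ofReal)).mulVec w = μ • w →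
        (S.map (Complex.ofReal)).mulVec w ≠ 0 := by
  intro T S
  refine ⟨?_, fun μ w hw hTw hSw => hw ?_⟩
  · have hT : -(T + T.transpose) = fromBlocks (L + L) 0 0 0 := by
      simp [T, fromBlocks_transpose, fromBlocks_add, fromBlocks_neg, hLsymm.eq]
    rw [hT]
    exact (hLpsd.add hLpsd).fromBlocks_zero
  have hSw_eq : S.map Complex.ofReal *ᵥ w = -(w ∘ Sum.inl) := by
    ext i
    simp [S, mulVec, dotProduct, Fintype.sum_sum_type, apply_ite Complex.ofReal]
  have ha : w ∘ Sum.inl = 0 := neg_eq_zero.mp (hSw_eq ▸ hSw)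
  have hLRb : (L * R).map Complex.ofReal *ᵥ (w ∘ Sum.inr) = 0 := by
    simpa [T, fromBlocks_map, fromBlocks_mulVec, Matrix.map_neg _ Complex.ofReal_neg, neg_mulVec,
      Pi.smul_comp, ha] using congrArg (· ∘ Sum.inl) hTw
  have hb : w ∘ Sum.inr = 0 := eq_zero_of_map_ofReal_mulVec_eq_zero
    (fun _ => eq_zero_of_mul_mulVec_eq_zero (fun x => (hker x).mp) hR1 hRorth) hLRb
  ext (i | j)
  exacts [congrFun ha i, congrFun hb j]

/-- For `L` symmetric PSD with kernel spanned by `1_N` and `R` an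
orthonormal basis of `1_N^⊥`, the block matrix `T = [[-L, -LR],[RᵀL, 0]]` satisfies
`T + Tᵀ ⪯ 0`, and `(S, T)` with `S = [-I, 0]` is observable: every eigenvector of `T`
is not in the kernel of `S`. -/
theorem block_matrix_dissipative_and_observable (N : ℕ) (hN : 0 < N)
    (L : Matrix (Fin N) (Fin N) ℝ) (R : Matrix (Fin N) (Fin (N - 1)) ℝ)
    (hLsymm : L.IsSymm) (hLpsd : L.PosSemidef)
    (hker : ∀ x : Fin N → ℝ, L.mulVec x = 0 ↔ ∃ c : ℝ, x = fun _ => c)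
    (hR1 : R.transpose.mulVec (fun _ => (1 : ℝ)) = 0)
    (hRorth : R.transpose * R = 1) :
    let T : Matrix (Fin N ⊕ Fin (N - 1)) (Fin N ⊕ Fin (N - 1)) ℝ :=
      Matrix.fromBlocks (-L) (-(L * R)) (R.transpose * L) 0
    let S : Matrix (Fin N) (Fin N ⊕ Fin (N - 1)) ℝ :=
      Matrix.of fun i j => Sum.casesOn j (fun k => if i = k then (-1 : ℝ) else 0) (fun _ => 0)
    (-(T + T.transpose)).PosSemidef ∧
      ∀ (μ : ℂ) (w : Fin N ⊕ Fin (N - 1) → ℂ), w ≠ 0 →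
        (T.map (Complex.ofReal)).mulVec w = μ • w →
        (S.map (Complex.ofReal)).mulVec w ≠ 0 :=
  block_matrix_dissipative_and_observable_general N L R hLsymm hLpsd hker hR1 hRorth
end

section
/- Suppose for each λ in σ(S) ∪ {0}, the matrix [[A - λI, B],[C, 0]] ∈ ℝ^{(n+1)×(n+1)} has full rank n+1. Then the regulator equations X₁S = AX₁ + BU₁ + E, 0 = CX₁ and 0 = AX₂ + BU₂, 1 = CX₂ admit solutions (X₁, U₁) and (X₂, U₂). -/
/-!
Stack the unknowns as `M = [X; U]` and put `P = [[A, B], [C, 0]]`, `J = [[I, 0], [0, 0]]`, so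
that the rank condition says `P - λJ` is invertible. The first regulator equation reads
`J M S - P M = [E; 0]`; as `M ↦ J M S - P M` is an endomorphism of a finite-dimensional space,
it suffices that it be injective. If `P M = J M S` then `(P - λJ) M = J M (S - λ)`, so for `λ` in
the spectrum of `S`, `M (S - λ) Y = 0` forces `M Y = 0`. Over `ℂ` the characteristic polynomial of
`S` is a product of such factors `X - λ`, and peeling them off one at a time from
`M χ_S(S) = 0` (Cayley–Hamilton) gives `M = 0`. The second regulator equation is
`P [X₂; U₂] = [0; 1]`, solvable because `P` is invertible (`λ = 0`).
-/

open Matrix Polynomial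

namespace Matrix

variable {K L m q : Type*} [Field K] [Field L] [Fintype m] [DecidableEq m] [Fintype q]
  [DecidableEq q]

theorem isUnit_of_rank_eq_card {M : Matrix m m K} (h : M.rank = Fintype.card m) : IsUnit M := by
  rw [← mulVec_surjective_iff_isUnit]
  refine (LinearMap.range_eq_top (f := M.mulVecLin)).mp (Submodule.eq_top_of_finrank_eq ?_)
  rw [← rank, h, Module.finrank_fintype_fun_eq_card]

theorem isUnit_of_isUnit_map {M : Matrix m m K} (f : K →+* L) (h : IsUnit (M.map f)) :
    IsUnit M := by
  rw [isUnit_iff_isUnit_det, ← RingHom.mapMatrix_apply, ← RingHom.map_det, isUnit_map_iff] at h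
  exact (isUnit_iff_isUnit_det M).2 h

section Pencil

variable {P J : Matrix m m K} {S : Matrix q q K} {M : Matrix m q K}

theorem mul_eq_zero_of_mul_sub_smul_mul_eq_zero (hM : P * M = J * M * S) {a : K}
    (ha : IsUnit (P - a • J)) {r : Type*} {Y : Matrix q r K} (hY : M * (S - a • 1) * Y = 0) :
    M * Y = 0 := by
  have hpencil : (P - a • J) * (M * Y) = J * (M * (S - a • 1) * Y) := by
    simp only [Matrix.sub_mul, Matrix.mul_sub, Matrix.smul_mul, Matrix.mul_smul, Matrix.mul_one,
      ← Matrix.mul_assoc, hM]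
  rw [hY, Matrix.mul_zero] at hpencil
  rw [← nonsing_inv_mul_cancel_left _ (M * Y) ((isUnit_iff_isUnit_det _).1 ha), hpencil,
    Matrix.mul_zero]

theorem eq_zero_of_mul_aeval_prod_X_sub_C_eq_zero (hM : P * M = J * M * S) (s : Multiset K)
    (hs : ∀ a ∈ s, IsUnit (P - a • J)) (h : M * aeval S (s.map fun a => X - C a).prod = 0) :
    M = 0 := by
  induction s using Multiset.induction_on with
  | empty => simpa using h
  | cons a s ih =>
    rw [Multiset.map_cons, Multiset.prod_cons, map_mul, ← Matrix.mul_assoc, map_sub, aeval_X,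
      aeval_C, Algebra.algebraMap_eq_smul_one] at h
    exact ih (fun b hb => hs b (Multiset.mem_cons_of_mem hb))
      (mul_eq_zero_of_mul_sub_smul_mul_eq_zero hM (hs a (Multiset.mem_cons_self a s)) h)

theorem eq_zero_of_mul_eq_mul_mul (hS : S.charpoly.Splits) (hM : P * M = J * M * S)
    (hPJ : ∀ a ∈ spectrum K S, IsUnit (P - a • J)) : M = 0 := by
  refine eq_zero_of_mul_aeval_prod_X_sub_C_eq_zero hM S.charpoly.roots
    (fun a ha => hPJ a (mem_spectrum_of_isRoot_charpoly (isRoot_of_mem_roots ha))) ?_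
  rw [← hS.eq_prod_roots_of_monic S.charpoly_monic, aeval_self_charpoly, Matrix.mul_zero]

theorem eq_zero_of_mul_eq_mul_mul_of_map [IsAlgClosed L] (f : K →+* L) (hM : P * M = J * M * S)
    (hPJ : ∀ a ∈ spectrum L (S.map f), IsUnit (P.map f - a • J.map f)) : M = 0 := by
  have hMf : P.map f * M.map f = J.map f * M.map f * S.map f := by
    simp only [← Matrix.map_mul, hM]
  have hMf0 := eq_zero_of_mul_eq_mul_mul (IsAlgClosed.splits _) hMf hPJ
  exact Matrix.map_injective f.injective (hMf0.trans (Matrix.map_zero _ (map_zero f)).symm)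

theorem exists_mul_mul_sub_mul_eq [IsAlgClosed L] (f : K →+* L)
    (hPJ : ∀ a ∈ spectrum L (S.map f), IsUnit (P.map f - a • J.map f)) (R : Matrix m q K) :
    ∃ M : Matrix m q K, J * M * S - P * M = R := by
  let T : Module.End K (Matrix m q K) :=
    { toFun M := J * M * S - P * M
      map_add' M N := by simp only [Matrix.mul_add, Matrix.add_mul]; abel
      map_smul' c M := by simp only [Matrix.mul_smul, Matrix.smul_mul, smul_sub, RingHom.id_apply] }
  have hT : Function.Injective T := by
    rw [← LinearMap.ker_eq_bot, LinearMap.ker_eq_bot']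
    exact fun M hM => eq_zero_of_mul_eq_mul_mul_of_map f (sub_eq_zero.1 hM).symm hPJ
  exact LinearMap.injective_iff_surjective.1 hT R

end Pencil

section Regulator

variable {R ι κ μ : Type*} [CommRing R] (A : Matrix ι ι R) (B : Matrix ι κ R) (C : Matrix κ ι R)

theorem fromBlocks_sub_smul_fromBlocks_one [DecidableEq ι] (a : R) :
    fromBlocks A B C 0 - a • fromBlocks (1 : Matrix ι ι R) 0 0 (0 : Matrix κ κ R) =
      fromBlocks (A - a • 1) B C 0 := by
  ext (i | i) (j | j) <;> simp

theorem fromBlocks_mul_fromRows_zero [Fintype ι] [Fintype κ] (X : Matrix ι μ R)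
    (U : Matrix κ μ R) :
    fromBlocks A B C 0 * fromRows X U = fromRows (A * X + B * U) (C * X) := by
  simp [fromBlocks_mul_fromRows]

theorem fromBlocks_one_mul_fromRows_mul_sub [Fintype ι] [DecidableEq ι] [Fintype κ]
    [Fintype μ] (X : Matrix ι μ R) (U : Matrix κ μ R) (S : Matrix μ μ R) :
    fromBlocks (1 : Matrix ι ι R) 0 0 (0 : Matrix κ κ R) * fromRows X U * S -
        fromBlocks A B C 0 * fromRows X U =
      fromRows (X * S - (A * X + B * U)) (-(C * X)) := by
  rw [fromBlocks_mul_fromRows_zero, fromBlocks_mul_fromRows_zero, fromRows_mul]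
  ext (i | i) j <;> simp

end Regulator

end Matrix

/-- If for every `λ ∈ σ(S) ∪ {0}` the matrix `[[A - λI, B],[C, 0]]` has
full rank `n+1`, then the regulator equations are solvable. -/
theorem regulator_equations_solvable (n q : ℕ)
    (A : Matrix (Fin n) (Fin n) ℝ) (B : Matrix (Fin n) (Fin 1) ℝ)
    (C : Matrix (Fin 1) (Fin n) ℝ) (E : Matrix (Fin n) (Fin q) ℝ)
    (S : Matrix (Fin q) (Fin q) ℝ)
    (hrank : ∀ lam : ℂ, (lam ∈ spectrum ℂ (S.map (Complex.ofReal)) ∨ lam = 0) →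
      (Matrix.fromBlocks (A.map (Complex.ofReal) - lam • (1 : Matrix (Fin n) (Fin n) ℂ))
          (B.map (Complex.ofReal)) (C.map (Complex.ofReal)) (0 : Matrix (Fin 1) (Fin 1) ℂ)).rank
        = n + 1) :
    (∃ (X₁ : Matrix (Fin n) (Fin q) ℝ) (U₁ : Matrix (Fin 1) (Fin q) ℝ),
        X₁ * S = A * X₁ + B * U₁ + E ∧ C * X₁ = 0) ∧
    (∃ (X₂ : Matrix (Fin n) (Fin 1) ℝ) (U₂ : Matrix (Fin 1) (Fin 1) ℝ),
        0 = A * X₂ + B * U₂ ∧ C * X₂ = 1) := by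
  set P := fromBlocks A B C (0 : Matrix (Fin 1) (Fin 1) ℝ)
  set J := fromBlocks (1 : Matrix (Fin n) (Fin n) ℝ) 0 0 (0 : Matrix (Fin 1) (Fin 1) ℝ)
  have hPJ (a : ℂ) (ha : a ∈ spectrum ℂ (S.map Complex.ofRealHom) ∨ a = 0) :
      IsUnit (P.map Complex.ofRealHom - a • J.map Complex.ofRealHom) := by
    simp only [P, J, fromBlocks_map, Matrix.map_zero _ (map_zero _),
      Matrix.map_one _ (map_zero _) (map_one _), fromBlocks_sub_smul_fromBlocks_one]
    exact isUnit_of_rank_eq_card ((hrank a ha).trans (by simp))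
  constructor
  · obtain ⟨M, hM⟩ :=
      exists_mul_mul_sub_mul_eq Complex.ofRealHom (fun a ha => hPJ a (.inl ha)) (fromRows E 0)
    rw [← fromRows_toRows M, fromBlocks_one_mul_fromRows_mul_sub, fromRows_ext_iff] at hM
    exact ⟨_, _, by rw [← hM.1]; abel, neg_eq_zero.1 hM.2⟩
  · have hP : IsUnit P :=
      isUnit_of_isUnit_map Complex.ofRealHom (by simpa using hPJ 0 (.inr rfl))
    obtain ⟨M, hM⟩ : ∃ M, P * M = fromRows 0 (1 : Matrix (Fin 1) (Fin 1) ℝ) :=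
      ⟨P⁻¹ * _, mul_nonsing_inv_cancel_left P _ ((isUnit_iff_isUnit_det P).1 hP)⟩
    rw [← fromRows_toRows M, fromBlocks_mul_fromRows_zero, fromRows_ext_iff] at hM
    exact ⟨_, _, hM.1.symm, hM.2⟩
end

section
/- Suppose (X₁, U₁) solves X₁S = AX₁ + BU₁ + E, CX₁ = 0 and (X₂, U₂) solves 0 = AX₂ + BU₂, CX₂ = 1. Then under the control u = K₁x + (U₁ - K₁X₁)ω + (U₂ - K₁X₂)r for a constant reference r, the error variable x̄ = x - X₁ω - X₂r satisfies x̄̇ = (A + BK₁)x̄ along ẋ = Ax + Bu + Eω, ω̇ = Sω; hence if A + BK₁ is Hurwitz, the output y = Cx converges exponentially to r. -/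
/-!
The regulator equations make the steady state `X₁ω + X₂r` absorb the exosystem and the
reference exactly: every forcing term cancels in the derivative of `x̄ = x - X₁ω - X₂r`, leaving
`x̄' = (A + BK₁)x̄`, while `CX₁ = 0` and `CX₂ = 1` give `Cx̄ = y - r`. Hence
`x̄ t = exp (t (A + BK₁)) x̄ 0`. For a Hurwitz matrix `M`, split a vector into generalized
eigenvectors of the complexification of `M`: on the generalized eigenspace of `μ`, `exp (tM)`
acts as `e^{tμ}` times a polynomial in `t`, which is dominated by `e^{-bt}` for `0 < b < -Re μ`.
-/

open NormedSpace Matrix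

attribute [local instance] Matrix.linftyOpNormedAddCommGroup Matrix.linftyOpNormedRing
  Matrix.linftyOpNormedAlgebra

/-- A real square matrix is Hurwitz if all its (complex) eigenvalues have
negative real part. -/
def IsHurwitz {k : ℕ} (M : Matrix (Fin k) (Fin k) ℝ) : Prop :=
  ∀ μ ∈ spectrum ℂ (M.map (Complex.ofReal)), μ.re < 0

def HasExpDecay {E : Type*} [Norm E] (f : ℝ → E) : Prop :=
  ∃ a b : ℝ, 0 < a ∧ 0 < b ∧ ∀ t ≥ (0 : ℝ), ‖f t‖ ≤ a * Real.exp (-b * t)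

namespace HasExpDecay

variable {E F : Type*} [SeminormedAddCommGroup E] [SeminormedAddCommGroup F]

theorem of_norm_le_mul {f : ℝ → E} {g : ℝ → F} (hf : HasExpDecay f) (K : ℝ)
    (hg : ∀ t ≥ (0 : ℝ), ‖g t‖ ≤ K * ‖f t‖) : HasExpDecay g := by
  obtain ⟨a, b, ha, hb, hfab⟩ := hf
  refine ⟨(|K| + 1) * a, b, by positivity, hb, fun t ht => ?_⟩
  calc ‖g t‖ ≤ K * ‖f t‖ := hg t ht
    _ ≤ (|K| + 1) * ‖f t‖ := by gcongr; linarith [le_abs_self K]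
    _ ≤ (|K| + 1) * (a * Real.exp (-b * t)) := by gcongr; exact hfab t ht
    _ = (|K| + 1) * a * Real.exp (-b * t) := by ring

theorem zero : HasExpDecay (fun _ => (0 : E)) :=
  ⟨1, 1, one_pos, one_pos, fun t _ => by simp [(Real.exp_pos _).le]⟩

theorem add {f g : ℝ → E} (hf : HasExpDecay f) (hg : HasExpDecay g) :
    HasExpDecay (fun t => f t + g t) := by
  obtain ⟨a, b, ha, hb, hf⟩ := hf
  obtain ⟨a', b', ha', hb', hg⟩ := hg
  refine ⟨a + a', min b b', by positivity, lt_min hb hb', fun t ht => ?_⟩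
  calc ‖f t + g t‖ ≤ ‖f t‖ + ‖g t‖ := norm_add_le _ _
    _ ≤ a * Real.exp (-b * t) + a' * Real.exp (-b' * t) := add_le_add (hf t ht) (hg t ht)
    _ ≤ a * Real.exp (-min b b' * t) + a' * Real.exp (-min b b' * t) := by
        gcongr
        · exact min_le_left b b'
        · exact min_le_right b b'
    _ = (a + a') * Real.exp (-min b b' * t) := by ring

theorem sum {ι : Type*} (s : Finset ι) {f : ι → ℝ → E} (hf : ∀ i ∈ s, HasExpDecay (f i)) :
    HasExpDecay (fun t => ∑ i ∈ s, f i t) := by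
  classical
  induction s using Finset.induction_on with
  | empty => simpa using zero
  | insert i s hi ih =>
    simp only [Finset.sum_insert hi]
    exact (hf i (s.mem_insert_self i)).add (ih fun j hj => hf j (Finset.mem_insert_of_mem hj))

end HasExpDecay

open Nat in
theorem hasExpDecay_pow_mul_exp (j : ℕ) {c : ℝ} (hc : c < 0) :
    HasExpDecay (fun t : ℝ => t ^ j * Real.exp (c * t)) := by
  set b := -c / 2 with hb_def
  have hb : 0 < b := by linarith
  refine ⟨j ! / b ^ j, b, by positivity, hb, fun t ht => ?_⟩
  have hpow : (b * t) ^ j / j ! ≤ Real.exp (b * t) :=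
    Real.pow_div_factorial_le_exp (b * t) (by positivity) j
  rw [Real.norm_eq_abs, abs_of_nonneg (by positivity)]
  calc t ^ j * Real.exp (c * t) = j ! / b ^ j * ((b * t) ^ j / j !) * Real.exp (c * t) := by
        field_simp; ring
    _ ≤ j ! / b ^ j * Real.exp (b * t) * Real.exp (c * t) := by gcongr
    _ = j ! / b ^ j * Real.exp (-b * t) := by
        rw [mul_assoc, ← Real.exp_add, hb_def]; ring_nf

theorem HasDerivAt.const_mulVec {m n : Type*} [Fintype m] [Fintype n] (P : Matrix m n ℝ)
    {f : ℝ → n → ℝ} {f' : n → ℝ} {t : ℝ} (hf : HasDerivAt f f' t) :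
    HasDerivAt (fun s => P *ᵥ f s) (P *ᵥ f') t :=
  (LinearMap.toContinuousLinearMap P.mulVecLin).hasFDerivAt.comp_hasDerivAt t hf

theorem HasSum.mulVec_const {X R m n : Type*} [Fintype n] [TopologicalSpace R]
    [NonUnitalNonAssocSemiring R] [IsTopologicalSemiring R] {f : X → Matrix m n R}
    {P : Matrix m n R} (hf : HasSum f P) (v : n → R) :
    HasSum (fun j => f j *ᵥ v) (P *ᵥ v) :=
  hf.map (mulVec.addMonoidHomLeft v) (continuous_id.matrix_mulVec continuous_const)

variable {ι : Type*} [Fintype ι] [DecidableEq ι]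

theorem HasDerivAt.mulVec_const {P : ℝ → Matrix ι ι ℝ} {P' : Matrix ι ι ℝ} {t : ℝ}
    (hP : HasDerivAt P P' t) (v : ι → ℝ) : HasDerivAt (fun s => P s *ᵥ v) (P' *ᵥ v) t :=
  ((LinearMap.toContinuousLinearMap ((mulVecBilin ℝ ℝ).flip v)).hasFDerivAt.comp_hasDerivAt t hP :)

theorem Matrix.eq_exp_smul_mulVec_of_hasDerivAt {M : Matrix ι ι ℝ} {f : ℝ → ι → ℝ}
    (hf : ∀ t, HasDerivAt f (M *ᵥ f t) t) : f = fun t => exp (t • M) *ᵥ f 0 := by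
  have hexp (t : ℝ) :
      HasDerivAt (fun s : ℝ => exp (s • M) *ᵥ f 0) (M *ᵥ (exp (t • M) *ᵥ f 0)) t := by
    rw [mulVec_mulVec]
    exact (hasDerivAt_exp_smul_const' M t).mulVec_const (f 0)
  exact ODE_solution_unique_univ (v := fun _ => LinearMap.toContinuousLinearMap M.mulVecLin)
    (s := fun _ => Set.univ) (t₀ := 0)
    (fun _ => (LinearMap.toContinuousLinearMap M.mulVecLin).lipschitz.lipschitzOnWith)
    (fun t => ⟨hf t, trivial⟩) (fun t => ⟨hexp t, trivial⟩) (by simp)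

open Nat in
theorem Matrix.exp_smul_mulVec_eq_sum (M : Matrix ι ι ℂ) (μ z : ℂ) {k : ℕ} {w : ι → ℂ}
    (hw : ((M - μ • 1) ^ k) *ᵥ w = 0) :
    exp (z • M) *ᵥ w = ∑ j ∈ Finset.range k,
      (Complex.exp (z * μ) * z ^ j / j !) • (((M - μ • 1) ^ j) *ᵥ w) := by
  set N := M - μ • 1
  have hsplit : z • M = (z * μ) • (1 : Matrix ι ι ℂ) + z • N := by
    simp only [N, smul_sub, smul_smul]; abel
  have hcomm : Commute ((z * μ) • (1 : Matrix ι ι ℂ)) (z • N) :=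
    ((Commute.one_left _).smul_left _).smul_right _
  have hscalar : exp ((z * μ) • (1 : Matrix ι ι ℂ)) = Complex.exp (z * μ) • 1 := by
    rw [← Algebra.algebraMap_eq_smul_one, Complex.exp_eq_exp_ℂ, ← Algebra.algebraMap_eq_smul_one]
    exact (algebraMap_exp_comm _).symm
  have hnil : exp (z • N) *ᵥ w = ∑ j ∈ Finset.range k, (z ^ j / j !) • ((N ^ j) *ᵥ w) := by
    refine ((exp_series_hasSum_exp' (𝕂 := ℂ) (z • N)).mulVec_const w).unique
      (hasSum_sum_of_ne_finset_zero fun j hj => ?_) |>.trans (Finset.sum_congr rfl fun j _ => ?_)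
    · rw [Finset.mem_range, not_lt] at hj
      rw [smul_pow, ← Nat.sub_add_cancel hj, pow_add N, smul_mulVec, smul_mulVec, ← mulVec_mulVec,
        hw, mulVec_zero, smul_zero, smul_zero]
    · rw [smul_pow, smul_mulVec, smul_mulVec, smul_smul, div_eq_inv_mul]
  have hexp : exp (z • M) = Complex.exp (z * μ) • exp (z • N) := by
    rw [hsplit]
    exact (exp_add_of_commute _ _ hcomm).trans (by rw [hscalar, smul_mul_assoc, one_mul])
  rw [hexp, smul_mulVec, hnil, Finset.smul_sum]
  refine Finset.sum_congr rfl fun j _ => ?_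
  rw [smul_smul, mul_div_assoc]

theorem Matrix.hasExpDecay_exp_smul_mulVec_of_pow_mulVec_eq_zero {M : Matrix ι ι ℂ} {μ : ℂ}
    (hμ : μ.re < 0) {k : ℕ} {w : ι → ℂ} (hw : ((M - μ • 1) ^ k) *ᵥ w = 0) :
    HasExpDecay (fun t : ℝ => exp (t • M) *ᵥ w) := by
  have hsum : (fun t : ℝ => exp (t • M) *ᵥ w) = fun t : ℝ => ∑ j ∈ Finset.range k,
      (Complex.exp (t * μ) * t ^ j / j.factorial) • (((M - μ • 1) ^ j) *ᵥ w) := by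
    ext1 t
    rw [← Complex.coe_smul, exp_smul_mulVec_eq_sum M μ t hw]
  rw [hsum]
  refine HasExpDecay.sum _ fun j _ => (hasExpDecay_pow_mul_exp j hμ).of_norm_le_mul
    (‖((M - μ • 1) ^ j) *ᵥ w‖ / j.factorial) fun t ht => le_of_eq ?_
  rw [norm_smul, norm_div, norm_mul, Complex.norm_exp, norm_pow, Complex.norm_real,
    Complex.norm_natCast, Real.norm_eq_abs, Real.norm_eq_abs, abs_mul, abs_pow, abs_of_nonneg ht,
    Real.abs_exp, Complex.re_ofReal_mul, mul_comm t μ.re]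
  ring

theorem Matrix.mem_spectrum_of_mem_maxGenEigenspace {K : Type*} [Field K] {M : Matrix ι ι K}
    {μ : K} {w : ι → K} (hw : w ∈ Module.End.maxGenEigenspace (toLin' M) μ) (hw0 : w ≠ 0) :
    μ ∈ spectrum K M := by
  have h : Module.End.HasUnifEigenvalue (toLin' M) μ ⊤ := (Submodule.ne_bot_iff _).2 ⟨w, hw, hw0⟩
  rw [← AlgEquiv.spectrum_eq toLinAlgEquiv' M]
  exact ((Module.End.hasUnifEigenvalue_iff_hasUnifEigenvalue_one (by simp)).1 h).mem_spectrum

theorem Matrix.exists_pow_sub_smul_one_mulVec_eq_zero {R : Type*} [CommRing R] {M : Matrix ι ι R}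
    {μ : R} {w : ι → R} (hw : w ∈ Module.End.maxGenEigenspace (toLin' M) μ) :
    ∃ k : ℕ, ((M - μ • 1) ^ k) *ᵥ w = 0 := by
  obtain ⟨k, hk⟩ := (Module.End.mem_maxGenEigenspace _ _ _).1 hw
  refine ⟨k, ?_⟩
  rwa [← toLinAlgEquiv'_apply, map_pow, map_sub, map_smul, map_one]

theorem Matrix.hasExpDecay_exp_smul_mulVec_of_forall_re_neg {M : Matrix ι ι ℂ}
    (hM : ∀ μ ∈ spectrum ℂ M, μ.re < 0) (w : ι → ℂ) :
    HasExpDecay (fun t : ℝ => exp (t • M) *ᵥ w) := by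
  have hw : w ∈ ⨆ μ, Module.End.maxGenEigenspace (toLin' M) μ := by
    rw [Module.End.iSup_maxGenEigenspace_eq_top]; trivial
  obtain ⟨c, hc, rfl⟩ := (Submodule.mem_iSup_iff_exists_finsupp _ w).1 hw
  simp only [Finsupp.sum, mulVec_sum]
  refine HasExpDecay.sum _ fun μ hμ => ?_
  obtain ⟨k, hk⟩ := exists_pow_sub_smul_one_mulVec_eq_zero (hc μ)
  exact hasExpDecay_exp_smul_mulVec_of_pow_mulVec_eq_zero
    (hM μ (mem_spectrum_of_mem_maxGenEigenspace (hc μ) (Finsupp.mem_support_iff.1 hμ))) hk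

theorem Matrix.exp_map_ofReal (M : Matrix ι ι ℝ) :
    exp (M.map Complex.ofReal) = (exp M).map Complex.ofReal :=
  (map_exp (Complex.ofRealHom.mapMatrix : Matrix ι ι ℝ →+* Matrix ι ι ℂ)
    (continuous_id.matrix_map Complex.continuous_ofReal) M).symm

theorem IsHurwitz.hasExpDecay_exp_smul_mulVec {n : ℕ} {M : Matrix (Fin n) (Fin n) ℝ}
    (hM : IsHurwitz M) (v : Fin n → ℝ) : HasExpDecay (fun t : ℝ => exp (t • M) *ᵥ v) := by
  refine (hasExpDecay_exp_smul_mulVec_of_forall_re_neg hM (Complex.ofReal ∘ v)).of_norm_le_mul 1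
    fun t _ => ?_
  have hcomplex : exp (t • M.map Complex.ofReal) *ᵥ (Complex.ofReal ∘ v) =
      Complex.ofReal ∘ (exp (t • M) *ᵥ v) := by
    ext i
    rw [← Matrix.map_smul Complex.ofReal t fun a => by
      rw [Complex.real_smul, smul_eq_mul, Complex.ofReal_mul], exp_map_ofReal]
    exact (RingHom.map_mulVec Complex.ofRealHom _ v i).symm
  rw [one_mul, hcomplex]
  refine (pi_norm_le_iff_of_nonneg (norm_nonneg _)).2 fun i => ?_
  rw [← Complex.norm_real]
  exact norm_le_pi_norm (Complex.ofReal ∘ (exp (t • M) *ᵥ v)) i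

section
variable {R n m q p : Type*} [CommRing R] [Fintype n] [Fintype m] [Fintype q] [Fintype p]
  {A : Matrix n n R} {B : Matrix n m R} {E : Matrix n q R} {S : Matrix q q R}
  {X₁ : Matrix n q R} {U₁ : Matrix m q R} {X₂ : Matrix n p R} {U₂ : Matrix m p R}

theorem closedLoop_mulVec_sub_sub (K₁ : Matrix m n R) (hreg1 : X₁ * S = A * X₁ + B * U₁ + E)
    (hreg2 : (0 : Matrix n p R) = A * X₂ + B * U₂) (x : n → R) (w : q → R) (c : p → R) :
    (A + B * K₁) *ᵥ (x - X₁ *ᵥ w - X₂ *ᵥ c) =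
      A *ᵥ x + B *ᵥ (K₁ *ᵥ x + (U₁ - K₁ * X₁) *ᵥ w + (U₂ - K₁ * X₂) *ᵥ c) + E *ᵥ w
        - X₁ *ᵥ (S *ᵥ w) := by
  obtain rfl : E = X₁ * S - A * X₁ - B * U₁ := by rw [hreg1]; abel
  have hX₂ : (A * X₂) *ᵥ c = -((B * U₂) *ᵥ c) := by
    rw [eq_neg_iff_add_eq_zero, ← add_mulVec, ← hreg2, zero_mulVec]
  simp only [mulVec_add, mulVec_sub, add_mulVec, sub_mulVec, mulVec_mulVec, Matrix.add_mul,
    Matrix.mul_assoc, hX₂]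
  abel

theorem mulVec_sub_sub_of_mul_eq {C : Matrix p n R} [DecidableEq p] (hreg1' : C * X₁ = 0)
    (hreg2' : C * X₂ = 1) (x : n → R) (w : q → R) (c : p → R) :
    C *ᵥ (x - X₁ *ᵥ w - X₂ *ᵥ c) = C *ᵥ x - c := by
  rw [mulVec_sub, mulVec_sub, mulVec_mulVec, mulVec_mulVec, hreg1', hreg2', zero_mulVec,
    one_mulVec, sub_zero]

end

/-- With the full-information regulator
`u = K₁x + (U₁ - K₁X₁)ω + (U₂ - K₁X₂)r`, the error `x̄ = x - X₁ω - X₂r` satisfies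
`x̄' = (A + BK₁)x̄`, and hence if `A + BK₁` is Hurwitz the output `y = Cx`
converges exponentially to the constant reference `r`. -/
theorem full_information_regulator_tracking (n q : ℕ)
    (A : Matrix (Fin n) (Fin n) ℝ) (B : Matrix (Fin n) (Fin 1) ℝ)
    (C : Matrix (Fin 1) (Fin n) ℝ) (E : Matrix (Fin n) (Fin q) ℝ)
    (S : Matrix (Fin q) (Fin q) ℝ) (K₁ : Matrix (Fin 1) (Fin n) ℝ)
    (X₁ : Matrix (Fin n) (Fin q) ℝ) (U₁ : Matrix (Fin 1) (Fin q) ℝ)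
    (X₂ : Matrix (Fin n) (Fin 1) ℝ) (U₂ : Matrix (Fin 1) (Fin 1) ℝ)
    (hreg1 : X₁ * S = A * X₁ + B * U₁ + E) (hreg1' : C * X₁ = 0)
    (hreg2 : (0 : Matrix (Fin n) (Fin 1) ℝ) = A * X₂ + B * U₂) (hreg2' : C * X₂ = 1)
    (r : ℝ) (x : ℝ → Fin n → ℝ) (ω : ℝ → Fin q → ℝ)
    (u : ℝ → Fin 1 → ℝ)
    (hu : ∀ t, u t = K₁.mulVec (x t) + (U₁ - K₁ * X₁).mulVec (ω t)
      + (U₂ - K₁ * X₂).mulVec (fun _ => r))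
    (hx : ∀ t, HasDerivAt x (A.mulVec (x t) + B.mulVec (u t) + E.mulVec (ω t)) t)
    (hω : ∀ t, HasDerivAt ω (S.mulVec (ω t)) t) :
    let xbar : ℝ → Fin n → ℝ := fun t => x t - X₁.mulVec (ω t) - X₂.mulVec (fun _ => r)
    (∀ t, HasDerivAt xbar ((A + B * K₁).mulVec (xbar t)) t) ∧
      (IsHurwitz (A + B * K₁) → ∃ a b : ℝ, 0 < a ∧ 0 < b ∧
        ∀ t ≥ (0 : ℝ), |C.mulVec (x t) 0 - r| ≤ a * Real.exp (-b * t)) := by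
  intro xbar
  have hxbar (t : ℝ) : HasDerivAt xbar ((A + B * K₁) *ᵥ xbar t) t := by
    rw [closedLoop_mulVec_sub_sub K₁ hreg1 hreg2, ← hu t]
    exact ((hx t).sub ((hω t).const_mulVec X₁)).sub_const _
  refine ⟨hxbar, fun hH => ?_⟩
  have hdecay : HasExpDecay xbar := by
    rw [eq_exp_smul_mulVec_of_hasDerivAt hxbar]
    exact hH.hasExpDecay_exp_smul_mulVec (xbar 0)
  refine hdecay.of_norm_le_mul (g := fun t => (C *ᵥ x t) 0 - r) ‖C‖ fun t _ => ?_
  calc ‖(C *ᵥ x t) 0 - r‖ = ‖(C *ᵥ xbar t) 0‖ := by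
        rw [mulVec_sub_sub_of_mul_eq hreg1' hreg2']; rfl
    _ ≤ ‖C *ᵥ xbar t‖ := norm_le_pi_norm _ 0
    _ ≤ ‖C‖ * ‖xbar t‖ := linfty_opNorm_mulVec C _
end
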